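/- arXiv:2102.03603 — 10 statements merged into one kernel-verified Lean document; each statement's English description precedes it below -/
import Mathlib

section
/- Let $\bar{Q} \in \mathbb{R}^{n\times r}$, $\hat{Q}, \hat{P}_\omega, Z_\omega \in \mathbb{R}^{r\times r}$, $\bar{P}_\omega \in \mathbb{R}^{n\times r}$, and let $M \in \mathbb{R}^{n\times n}$, $\hat{M} \in \mathbb{R}^{r\times r}$ satisfy the frequency-limited gramian decompositions $\bar{Q}_\omega = M^T\bar{Q} + \bar{Q}\hat{M}$ and $\hat{Q}_\omega = \hat{M}^T\hat{Q} + \hat{Q}\hat{M}$, with $\hat{M}$ invertible. Define $X_\omega = \hat{M}^T Z_\omega - \bar{Q}^T M \bar{P}_\omega + \hat{Q}\hat{M}\hat{P}_\omega$. Then $\bar{Q}^T\bar{P}_\omega - \hat{Q}\hat{P}_\omega + Z_\omega = 0$ holds if and only if $\bar{Q}_\omega^T\bar{P}_\omega - \hat{Q}_\omega\hat{P}_\omega + X_\omega = 0$ holds. -/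
open Matrix

/-- **Proposition 1 (frequency-limited part).**
Given the frequency-limited gramian decompositions
`Q̄ω = Mᵀ Q̄ + Q̄ M̂` and `Q̂ω = M̂ᵀ Q̂ + Q̂ M̂` with `M̂` invertible, and setting
`Xω = M̂ᵀ Zω − Q̄ᵀ M P̄ω + Q̂ M̂ P̂ω`, the gramian-based optimality condition
`Q̄ᵀ P̄ω − Q̂ P̂ω + Zω = 0` holds iff `Q̄ωᵀ P̄ω − Q̂ω P̂ω + Xω = 0` holds. -/
theorem freq_limited_optimality_condition_equiv
    {n r : ℕ}
    (Qbar : Matrix (Fin n) (Fin r) ℝ)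
    (Qhat Phat Zomega : Matrix (Fin r) (Fin r) ℝ)
    (Pbar : Matrix (Fin n) (Fin r) ℝ)
    (M : Matrix (Fin n) (Fin n) ℝ)
    (Mhat : Matrix (Fin r) (Fin r) ℝ)
    (hMhat : IsUnit Mhat)
    (Qbaromega : Matrix (Fin n) (Fin r) ℝ)
    (hQbaromega : Qbaromega = Mᵀ * Qbar + Qbar * Mhat)
    (Qhatomega : Matrix (Fin r) (Fin r) ℝ)
    (hQhatomega : Qhatomega = Mhatᵀ * Qhat + Qhat * Mhat)
    (Xomega : Matrix (Fin r) (Fin r) ℝ)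
    (hXomega : Xomega = Mhatᵀ * Zomega - Qbarᵀ * M * Pbar + Qhat * Mhat * Phat) :
    Qbarᵀ * Pbar - Qhat * Phat + Zomega = 0 ↔
      Qbaromegaᵀ * Pbar - Qhatomega * Phat + Xomega = 0 := by
  subst hQbaromega hQhatomega hXomega
  have key : (Mᵀ * Qbar + Qbar * Mhat)ᵀ * Pbar - (Mhatᵀ * Qhat + Qhat * Mhat) * Phat +
      (Mhatᵀ * Zomega - Qbarᵀ * M * Pbar + Qhat * Mhat * Phat)
      = Mhatᵀ * (Qbarᵀ * Pbar - Qhat * Phat + Zomega) := by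
    simp [Matrix.transpose_add, Matrix.transpose_mul, Matrix.mul_sub, Matrix.mul_add,
      Matrix.add_mul, Matrix.sub_mul, Matrix.mul_assoc]
    abel
  rw [key]
  constructor
  · intro h; rw [h, Matrix.mul_zero]
  · intro h
    have hdet : IsUnit Mhatᵀ.det := by
      rw [Matrix.det_transpose]
      exact hMhat.map (Matrix.detMonoidHom)
    have := congrArg (fun X => Mhatᵀ⁻¹ * X) h
    simpa [← Matrix.mul_assoc, Matrix.nonsing_inv_mul _ hdet] using this
end

section
/- Let $A \in \mathbb{R}^{n\times n}$, $B \in \mathbb{R}^{n\times m}$, $C \in \mathbb{R}^{p\times n}$, and let $\hat{V}, \hat{W} \in \mathbb{R}^{n\times r}$ satisfy $\hat{W}^T\hat{V} = I$. Define the reduced model $\hat{A} = \hat{W}^T A \hat{V}$, $\hat{B} = \hat{W}^T B$, $\hat{C} = C\hat{V}$. Let $B_\omega \in \mathbb{R}^{n\times m}$ and $\hat{B}_\omega \in \mathbb{R}^{r\times m}$ be given, let $\bar{P}_\omega \in \mathbb{R}^{n\times r}$ satisfy $A\bar{P}_\omega + \bar{P}_\omega\hat{A}^T + B\hat{B}_\omega^T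 + B_\omega\hat{B}^T = 0$, and suppose the reduced Lyapunov equation $\hat{A}X + X\hat{A}^T + \hat{B}\hat{B}_\omega^T + \hat{B}_\omega\hat{B}^T = 0$ has $\hat{P}_\omega$ as its unique solution. If $\hat{V} = \bar{P}_\omega$ and $B_\omega = \hat{V}\hat{B}_\omega$, then $\hat{P}_\omega = I$ and $C\bar{P}_\omega - \hat{C}\hat{P}_\omega = 0$. -/
open Matrix

/-- **Theorem 1, first half (frequency-limited case).**
If the reduced model is obtained via the oblique projection with `V̂ = P̄ω` and
`Bω = V̂ B̂ω`, then the unique solution `P̂ω` of the reduced frequency-limited Lyapunov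
equation equals the identity and the optimality condition `C P̄ω − Ĉ P̂ω = 0` holds. -/
theorem freq_limited_projection_satisfies_a3
    {n m p r : ℕ}
    (A : Matrix (Fin n) (Fin n) ℝ)
    (B : Matrix (Fin n) (Fin m) ℝ)
    (C : Matrix (Fin p) (Fin n) ℝ)
    (V W : Matrix (Fin n) (Fin r) ℝ)
    (hWV : Wᵀ * V = 1)
    (Ahat : Matrix (Fin r) (Fin r) ℝ) (hAhat : Ahat = Wᵀ * A * V)
    (Bhat : Matrix (Fin r) (Fin m) ℝ) (hBhat : Bhat = Wᵀ * B)
    (Chat : Matrix (Fin p) (Fin r) ℝ) (hChat : Chat = C * V)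
    (Bomega : Matrix (Fin n) (Fin m) ℝ)
    (Bhatomega : Matrix (Fin r) (Fin m) ℝ)
    (Pbaromega : Matrix (Fin n) (Fin r) ℝ)
    (hPbaromega : A * Pbaromega + Pbaromega * Ahatᵀ + B * Bhatomegaᵀ + Bomega * Bhatᵀ = 0)
    (Phatomega : Matrix (Fin r) (Fin r) ℝ)
    (hPhatomega : Ahat * Phatomega + Phatomega * Ahatᵀ + Bhat * Bhatomegaᵀ +
      Bhatomega * Bhatᵀ = 0)
    (huniq : ∀ X : Matrix (Fin r) (Fin r) ℝ,
      Ahat * X + X * Ahatᵀ + Bhat * Bhatomegaᵀ + Bhatomega * Bhatᵀ = 0 → X = Phatomega)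
    (hV : V = Pbaromega)
    (hBomega : Bomega = V * Bhatomega) :
    Phatomega = 1 ∧ C * Pbaromega - Chat * Phatomega = 0 := by
  have h1 : Ahat * (1 : Matrix (Fin r) (Fin r) ℝ) + 1 * Ahatᵀ + Bhat * Bhatomegaᵀ +
      Bhatomega * Bhatᵀ = 0 := by
    have := congrArg (fun M => Wᵀ * M) hPbaromega
    simp only [Matrix.mul_add, Matrix.mul_zero] at this
    rw [hBomega, ← hV] at this
    calc Ahat * 1 + 1 * Ahatᵀ + Bhat * Bhatomegaᵀ + Bhatomega * Bhatᵀ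
        = Wᵀ * (A * V) + Wᵀ * (V * Ahatᵀ) + Wᵀ * (B * Bhatomegaᵀ) +
          Wᵀ * (V * Bhatomega * Bhatᵀ) := by
          rw [hAhat, hBhat]
          simp only [← Matrix.mul_assoc, hWV, Matrix.mul_one, Matrix.one_mul]
      _ = 0 := this
  have hP : Phatomega = 1 := (huniq 1 h1).symm
  refine ⟨hP, ?_⟩
  rw [hP, Matrix.mul_one, hChat, hV]
  simp
end

section
/- Let $A \in \mathbb{R}^{n\times n}$, $B \in \mathbb{R}^{n\times m}$, $C \in \mathbb{R}^{p\times n}$, and let $\hat{V}, \hat{W} \in \mathbb{R}^{n\times r}$ satisfy $\hat{W}^T\hat{V} = I$. Define the reduced model $\hat{A} = \hat{W}^T A \hat{V}$, $\hat{B} = \hat{W}^T B$, $\hat{C} = C\hat{V}$. Let $C_\omega \in \mathbb{R}^{p\times n}$ and $\hat{C}_\omega \in \mathbb{R}^{p\times r}$ be given, let $\bar{Q}_\omega \in \mathbb{R}^{n\times r}$ satisfy $A^T\bar{Q}_\omega + \bar{Q}_\omega\hat{A} + C^T\hat{C}_\omega + C_\omega^T\hat{C} = 0$, and suppose the reduced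 Lyapunov equation $\hat{A}^TX + X\hat{A} + \hat{C}^T\hat{C}_\omega + \hat{C}_\omega^T\hat{C} = 0$ has $\hat{Q}_\omega$ as its unique solution. If $\hat{W} = \bar{Q}_\omega$ and $C_\omega = \hat{C}_\omega\hat{W}^T$, then $\hat{Q}_\omega = I$ and $\bar{Q}_\omega^T B - \hat{Q}_\omega\hat{B} = 0$. -/
open Matrix

/-- **Theorem 1, second half (frequency-limited case).**
If the reduced model is obtained via the oblique projection with `Ŵ = Q̄ω` and
`Cω = Ĉω Ŵᵀ`, then the unique solution `Q̂ω` of the reduced frequency-limited Lyapunov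
equation equals the identity and the optimality condition `Q̄ωᵀ B − Q̂ω B̂ = 0` holds. -/
theorem freq_limited_projection_satisfies_a2
    {n m p r : ℕ}
    (A : Matrix (Fin n) (Fin n) ℝ)
    (B : Matrix (Fin n) (Fin m) ℝ)
    (C : Matrix (Fin p) (Fin n) ℝ)
    (V W : Matrix (Fin n) (Fin r) ℝ)
    (hWV : Wᵀ * V = 1)
    (Ahat : Matrix (Fin r) (Fin r) ℝ) (hAhat : Ahat = Wᵀ * A * V)
    (Bhat : Matrix (Fin r) (Fin m) ℝ) (hBhat : Bhat = Wᵀ * B)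
    (Chat : Matrix (Fin p) (Fin r) ℝ) (hChat : Chat = C * V)
    (Comega : Matrix (Fin p) (Fin n) ℝ)
    (Chatomega : Matrix (Fin p) (Fin r) ℝ)
    (Qbaromega : Matrix (Fin n) (Fin r) ℝ)
    (hQbaromega : Aᵀ * Qbaromega + Qbaromega * Ahat + Cᵀ * Chatomega + Comegaᵀ * Chat = 0)
    (Qhatomega : Matrix (Fin r) (Fin r) ℝ)
    (hQhatomega : Ahatᵀ * Qhatomega + Qhatomega * Ahat + Chatᵀ * Chatomega +
      Chatomegaᵀ * Chat = 0)
    (huniq : ∀ X : Matrix (Fin r) (Fin r) ℝ,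
      Ahatᵀ * X + X * Ahat + Chatᵀ * Chatomega + Chatomegaᵀ * Chat = 0 → X = Qhatomega)
    (hW : W = Qbaromega)
    (hComega : Comega = Chatomega * Wᵀ) :
    Qhatomega = 1 ∧ Qbaromegaᵀ * B - Qhatomega * Bhat = 0 := by
  subst hAhat hBhat hChat hComega hW
  have hVW : Vᵀ * W = 1 := by
    have h := congrArg Matrix.transpose hWV
    simpa [Matrix.transpose_mul] using h
  have h1 : (Wᵀ * A * V)ᵀ * (1 : Matrix (Fin r) (Fin r) ℝ) + 1 * (Wᵀ * A * V) +
      (C * V)ᵀ * Chatomega + Chatomegaᵀ * (C * V) = 0 := by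
    have h := congrArg (fun M => Vᵀ * M) hQbaromega
    simp only [Matrix.mul_add, Matrix.mul_zero] at h
    simpa [Matrix.transpose_mul, Matrix.mul_one, Matrix.one_mul,
      ← Matrix.mul_assoc, hVW] using h
  have hQ1 : Qhatomega = 1 := (huniq 1 h1).symm
  subst hQ1
  refine ⟨rfl, ?_⟩
  simp
end

section
/- Let $A \in \mathbb{R}^{n\times n}$, $B \in \mathbb{R}^{n\times m}$, $C \in \mathbb{R}^{p\times n}$, $\tau > 0$, and let $\hat{V}, \hat{W} \in \mathbb{R}^{n\times r}$ satisfy $\hat{W}^T\hat{V} = I$. Define the reduced model $\hat{A} = \hat{W}^T A \hat{V}$, $\hat{B} = \hat{W}^T B$, $\hat{C} = C\hat{V}$, and set $B_\tau = \exp(\tau A)B$, $\hat{B}_\tau = \exp(\tau\hat{A})\hat{B}$. Let $\bar{P}_\tau \in \mathbb{R}^{n\times r}$ satisfy $A\bar{P}_\tau + \bar{P}_\tau\hat{A}^T + B\hat{B}^T - B_\tau\hat{B}_\tau^T = 0$, and suppose the reduced Lyapunov equation $\hat{A}X + X\hat{A}^T + \hat{B}\hat{B}^T - \hat{B}_\tau\hat{B}_\tau^T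 = 0$ has $\hat{P}_\tau$ as its unique solution. If $\hat{V} = \bar{P}_\tau$ and $B_\tau = \hat{V}\hat{B}_\tau$, then $\hat{P}_\tau = I$ and $C\bar{P}_\tau - \hat{C}\hat{P}_\tau = 0$. -/
open Matrix NormedSpace

/-! Since `Wᵀ V = 1` and `V = P̄τ`, `Bτ = V B̂τ`, multiplying the full-order equation for `P̄τ` on the
left by `Wᵀ` yields the reduced Lyapunov equation at `X = 1`; uniqueness gives `P̂τ = 1`, and then
`C P̄τ = C V = Ĉ`. -/

theorem lyapunov_residual_one_of_left_inverse {R ι κ μ : Type*} [Ring R] [Fintype ι] [Fintype κ]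
    [Fintype μ] [DecidableEq κ] {V : Matrix ι κ R} {L : Matrix κ ι R} (hLV : L * V = 1)
    {A : Matrix ι ι R} {S : Matrix κ κ R} {B : Matrix ι μ R} {Y : Matrix μ κ R}
    {G : Matrix κ μ R} {H : Matrix μ κ R}
    (h : A * V + V * S + B * Y - V * G * H = 0) :
    L * A * V * 1 + 1 * S + L * B * Y - G * H = 0 := by
  have hL := congrArg (L * ·) h
  simpa only [Matrix.mul_add, Matrix.mul_sub, Matrix.mul_zero, Matrix.mul_assoc,
    ← Matrix.mul_assoc L V, hLV, Matrix.one_mul, Matrix.mul_one] using hL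

theorem time_limited_projection_satisfies_b3_general
    {n m p r : ℕ}
    (A : Matrix (Fin n) (Fin n) ℝ)
    (B : Matrix (Fin n) (Fin m) ℝ)
    (C : Matrix (Fin p) (Fin n) ℝ)
    (V W : Matrix (Fin n) (Fin r) ℝ)
    (hWV : Wᵀ * V = 1)
    (Ahat : Matrix (Fin r) (Fin r) ℝ) (hAhat : Ahat = Wᵀ * A * V)
    (Bhat : Matrix (Fin r) (Fin m) ℝ) (hBhat : Bhat = Wᵀ * B)
    (Chat : Matrix (Fin p) (Fin r) ℝ) (hChat : Chat = C * V)
    (Btau : Matrix (Fin n) (Fin m) ℝ)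
    (Bhattau : Matrix (Fin r) (Fin m) ℝ)
    (Pbartau : Matrix (Fin n) (Fin r) ℝ)
    (hPbartau : A * Pbartau + Pbartau * Ahatᵀ + B * Bhatᵀ - Btau * Bhattauᵀ = 0)
    (Phattau : Matrix (Fin r) (Fin r) ℝ)
    (huniq : ∀ X : Matrix (Fin r) (Fin r) ℝ,
      Ahat * X + X * Ahatᵀ + Bhat * Bhatᵀ - Bhattau * Bhattauᵀ = 0 → X = Phattau)
    (hV : V = Pbartau)
    (hBtauV : Btau = V * Bhattau) :
    Phattau = 1 ∧ C * Pbartau - Chat * Phattau = 0 := by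
  subst hV hBtauV hAhat hBhat
  have hOne := lyapunov_residual_one_of_left_inverse hWV hPbartau
  have hPhat : Phattau = 1 := (huniq 1 hOne).symm
  exact ⟨hPhat, by rw [hPhat, Matrix.mul_one, hChat, sub_self]⟩

/-- **Theorem 2, first half (time-limited case).**
If the reduced model is obtained via the oblique projection with `V̂ = P̄τ` and
`Bτ = V̂ B̂τ`, then the unique solution `P̂τ` of the reduced time-limited Lyapunov
equation equals the identity and the optimality condition `C P̄τ − Ĉ P̂τ = 0` holds. -/
theorem time_limited_projection_satisfies_b3
    {n m p r : ℕ}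
    (A : Matrix (Fin n) (Fin n) ℝ)
    (B : Matrix (Fin n) (Fin m) ℝ)
    (C : Matrix (Fin p) (Fin n) ℝ)
    (τ : ℝ) (hτ : 0 < τ)
    (V W : Matrix (Fin n) (Fin r) ℝ)
    (hWV : Wᵀ * V = 1)
    (Ahat : Matrix (Fin r) (Fin r) ℝ) (hAhat : Ahat = Wᵀ * A * V)
    (Bhat : Matrix (Fin r) (Fin m) ℝ) (hBhat : Bhat = Wᵀ * B)
    (Chat : Matrix (Fin p) (Fin r) ℝ) (hChat : Chat = C * V)
    (Btau : Matrix (Fin n) (Fin m) ℝ) (hBtau : Btau = exp (τ • A) * B)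
    (Bhattau : Matrix (Fin r) (Fin m) ℝ) (hBhattau : Bhattau = exp (τ • Ahat) * Bhat)
    (Pbartau : Matrix (Fin n) (Fin r) ℝ)
    (hPbartau : A * Pbartau + Pbartau * Ahatᵀ + B * Bhatᵀ - Btau * Bhattauᵀ = 0)
    (Phattau : Matrix (Fin r) (Fin r) ℝ)
    (hPhattau : Ahat * Phattau + Phattau * Ahatᵀ + Bhat * Bhatᵀ - Bhattau * Bhattauᵀ = 0)
    (huniq : ∀ X : Matrix (Fin r) (Fin r) ℝ,
      Ahat * X + X * Ahatᵀ + Bhat * Bhatᵀ - Bhattau * Bhattauᵀ = 0 → X = Phattau)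
    (hV : V = Pbartau)
    (hBtauV : Btau = V * Bhattau) :
    Phattau = 1 ∧ C * Pbartau - Chat * Phattau = 0 :=
  time_limited_projection_satisfies_b3_general A B C V W hWV Ahat hAhat Bhat hBhat Chat hChat Btau
    Bhattau Pbartau hPbartau Phattau huniq hV hBtauV
end

section
/- Let $A \in \mathbb{R}^{n\times n}$, $B \in \mathbb{R}^{n\times m}$, $C \in \mathbb{R}^{p\times n}$, $\tau > 0$, and let $\hat{V}, \hat{W} \in \mathbb{R}^{n\times r}$ satisfy $\hat{W}^T\hat{V} = I$. Define the reduced model $\hat{A} = \hat{W}^T A \hat{V}$, $\hat{B} = \hat{W}^T B$, $\hat{C} = C\hat{V}$, and set $C_\tau = C\exp(\tau A)$, $\hat{C}_\tau = \hat{C}\exp(\tau\hat{A})$. Let $\bar{Q}_\tau \in \mathbb{R}^{n\times r}$ satisfy $A^T\bar{Q}_\tau + \bar{Q}_\tau\hat{A} + C^T\hat{C} - C_\tau^T\hat{C}_\tau = 0$, and suppose the reduced Lyapunov equation $\hat{A}^TX + X\hat{A} + \hat{C}^T\hat{C} - \hat{C}_\tau^T\hat{C}_\tau = 0$ has $\hat{Q}_\tau$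 as its unique solution. If $\hat{W} = \bar{Q}_\tau$ and $C_\tau = \hat{C}_\tau\hat{W}^T$, then $\hat{Q}_\tau = I$ and $\bar{Q}_\tau^T B - \hat{Q}_\tau\hat{B} = 0$. -/
open Matrix NormedSpace

/-!
Multiplying the full-order equation for `Q̄τ = Ŵ` on the left by `V̂ᵀ` and using `V̂ᵀŴ = I`
turns it term by term into the reduced equation with `X = I`; uniqueness gives `Q̂τ = I`,
and then `Q̄τᵀB = ŴᵀB = B̂ = Q̂τB̂`.
-/

theorem Matrix.reduced_lyapunov_one_of_projection {R ι κ π : Type*} [CommRing R] [Fintype ι]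
    [Fintype κ] [Fintype π] [DecidableEq κ] {A : Matrix ι ι R} {C Ctau : Matrix π ι R}
    {V W : Matrix ι κ R} {Chattau : Matrix π κ R}
    (hWV : Wᵀ * V = 1)
    (hQbar : Aᵀ * W + W * (Wᵀ * A * V) + Cᵀ * (C * V) - Ctauᵀ * Chattau = 0)
    (hCtauW : Ctau = Chattau * Wᵀ) :
    (Wᵀ * A * V)ᵀ * 1 + 1 * (Wᵀ * A * V) + (C * V)ᵀ * (C * V) - Chattauᵀ * Chattau = 0 := by
  have hVW : Vᵀ * W = 1 := by simpa using congrArg transpose hWV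
  calc (Wᵀ * A * V)ᵀ * 1 + 1 * (Wᵀ * A * V) + (C * V)ᵀ * (C * V) - Chattauᵀ * Chattau
      = Vᵀ * (Aᵀ * W + W * (Wᵀ * A * V) + Cᵀ * (C * V) - Ctauᵀ * Chattau) := by
        simp only [hCtauW, transpose_mul, transpose_transpose, Matrix.mul_add, Matrix.mul_sub,
          Matrix.mul_one, Matrix.one_mul, ← Matrix.mul_assoc, hVW]
    _ = 0 := by rw [hQbar, Matrix.mul_zero]

theorem time_limited_projection_satisfies_b2_general
    {n m p r : ℕ}
    (A : Matrix (Fin n) (Fin n) ℝ)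
    (B : Matrix (Fin n) (Fin m) ℝ)
    (C : Matrix (Fin p) (Fin n) ℝ)
    (V W : Matrix (Fin n) (Fin r) ℝ)
    (hWV : Wᵀ * V = 1)
    (Ahat : Matrix (Fin r) (Fin r) ℝ) (hAhat : Ahat = Wᵀ * A * V)
    (Bhat : Matrix (Fin r) (Fin m) ℝ) (hBhat : Bhat = Wᵀ * B)
    (Chat : Matrix (Fin p) (Fin r) ℝ) (hChat : Chat = C * V)
    (Ctau : Matrix (Fin p) (Fin n) ℝ)
    (Chattau : Matrix (Fin p) (Fin r) ℝ)
    (Qbartau : Matrix (Fin n) (Fin r) ℝ)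
    (hQbartau : Aᵀ * Qbartau + Qbartau * Ahat + Cᵀ * Chat - Ctauᵀ * Chattau = 0)
    (Qhattau : Matrix (Fin r) (Fin r) ℝ)
    (huniq : ∀ X : Matrix (Fin r) (Fin r) ℝ,
      Ahatᵀ * X + X * Ahat + Chatᵀ * Chat - Chattauᵀ * Chattau = 0 → X = Qhattau)
    (hW : W = Qbartau)
    (hCtauW : Ctau = Chattau * Wᵀ) :
    Qhattau = 1 ∧ Qbartauᵀ * B - Qhattau * Bhat = 0 := by
  subst hW hAhat hChat
  have hQhat : Qhattau = 1 :=
    (huniq 1 (reduced_lyapunov_one_of_projection hWV hQbartau hCtauW)).symm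
  exact ⟨hQhat, by rw [hQhat, Matrix.one_mul, hBhat, sub_self]⟩

/-- **Theorem 2, second half (time-limited case).**
If the reduced model is obtained via the oblique projection with `Ŵ = Q̄τ` and
`Cτ = Ĉτ Ŵᵀ`, then the unique solution `Q̂τ` of the reduced time-limited Lyapunov
equation equals the identity and the optimality condition `Q̄τᵀ B − Q̂τ B̂ = 0` holds. -/
theorem time_limited_projection_satisfies_b2
    {n m p r : ℕ}
    (A : Matrix (Fin n) (Fin n) ℝ)
    (B : Matrix (Fin n) (Fin m) ℝ)
    (C : Matrix (Fin p) (Fin n) ℝ)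
    (τ : ℝ) (hτ : 0 < τ)
    (V W : Matrix (Fin n) (Fin r) ℝ)
    (hWV : Wᵀ * V = 1)
    (Ahat : Matrix (Fin r) (Fin r) ℝ) (hAhat : Ahat = Wᵀ * A * V)
    (Bhat : Matrix (Fin r) (Fin m) ℝ) (hBhat : Bhat = Wᵀ * B)
    (Chat : Matrix (Fin p) (Fin r) ℝ) (hChat : Chat = C * V)
    (Ctau : Matrix (Fin p) (Fin n) ℝ) (hCtau : Ctau = C * NormedSpace.exp (τ • A))
    (Chattau : Matrix (Fin p) (Fin r) ℝ) (hChattau : Chattau = Chat * NormedSpace.exp (τ • Ahat))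
    (Qbartau : Matrix (Fin n) (Fin r) ℝ)
    (hQbartau : Aᵀ * Qbartau + Qbartau * Ahat + Cᵀ * Chat - Ctauᵀ * Chattau = 0)
    (Qhattau : Matrix (Fin r) (Fin r) ℝ)
    (hQhattau : Ahatᵀ * Qhattau + Qhattau * Ahat + Chatᵀ * Chat - Chattauᵀ * Chattau = 0)
    (huniq : ∀ X : Matrix (Fin r) (Fin r) ℝ,
      Ahatᵀ * X + X * Ahat + Chatᵀ * Chat - Chattauᵀ * Chattau = 0 → X = Qhattau)
    (hW : W = Qbartau)
    (hCtauW : Ctau = Chattau * Wᵀ) :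
    Qhattau = 1 ∧ Qbartauᵀ * B - Qhattau * Bhat = 0 :=
  time_limited_projection_satisfies_b2_general A B C V W hWV Ahat hAhat Bhat hBhat Chat hChat Ctau
    Chattau Qbartau hQbartau Qhattau huniq hW hCtauW
end

section
/- Let $A \in \mathbb{C}^{n\times n}$, $B \in \mathbb{C}^{n\times m}$, $C \in \mathbb{C}^{p\times n}$, $\tau > 0$. Let $\hat{A} = \hat{R}\hat{\Lambda}\hat{R}^{-1}$ with $\hat{R} \in \mathbb{C}^{r\times r}$ invertible and $\hat{\Lambda} = \mathrm{diag}(\hat{\lambda}_1,\ldots,\hat{\lambda}_r)$, let $\hat{B} \in \mathbb{C}^{r\times m}$, $\hat{C} \in \mathbb{C}^{p\times r}$, and suppose $-\hat{\lambda}_i I - A$ and $-\hat{\lambda}_i I - \hat{A}$ are invertible for every $i$. Set $B_\tau = \exp(\tau A)B$, $\hat{B}_\tau = \exp(\tau\hat{A})\hat{B}$, define $G_{\mathcal{T}}(s) = C(sI-A)^{-1}[B,\; -B_\tau]$ and $\hat{G}_{\mathcal{T}}(s) = \hat{C}(sI-\hat{A})^{-1}[\hat{B},\; -\hat{B}_\tau]$,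 let $\hat{r}_i^T$ be the $i$-th row of $\hat{R}^{-1}\hat{B}$, and set $\tilde{r}_i = \begin{bmatrix}\hat{r}_i \\ e^{\hat{\lambda}_i\tau}\hat{r}_i\end{bmatrix}$. Let $\bar{P}_\tau$ satisfy $A\bar{P}_\tau + \bar{P}_\tau\hat{A}^T + B\hat{B}^T - B_\tau\hat{B}_\tau^T = 0$ and $\hat{P}_\tau$ satisfy $\hat{A}\hat{P}_\tau + \hat{P}_\tau\hat{A}^T + \hat{B}\hat{B}^T - \hat{B}_\tau\hat{B}_\tau^T = 0$. Then $C\bar{P}_\tau = \hat{C}\hat{P}_\tau$ if and only if $G_{\mathcal{T}}(-\hat{\lambda}_i)\tilde{r}_i = \hat{G}_{\mathcal{T}}(-\hat{\lambda}_i)\tilde{r}_i$ for every $i = 1,\ldots,r$. -/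
/-!
Multiplying the Sylvester equation for `P̄τ` on the right by `R̂⁻ᵀ`, whose columns are
eigenvectors of `Âᵀ` (`Âᵀ R̂⁻ᵀ = R̂⁻ᵀ Λ̂`), decouples it into one shifted linear system per pole:
the `i`-th column `x` of `P̄τ R̂⁻ᵀ` solves `(-λ̂ᵢ I - A) x = [B, -Bτ] r̃ᵢ`, where the second block of
`r̃ᵢ` appears because `R̂⁻¹ B̂τ = e^{τΛ̂} R̂⁻¹ B̂`. Hence the `i`-th column of `C P̄τ R̂⁻ᵀ` is
`G_T(-λ̂ᵢ) r̃ᵢ`, and likewise for the reduced model. As `R̂⁻ᵀ` is invertible, `C P̄τ = Ĉ P̂τ` holds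
exactly when all these columns agree.
-/

open Matrix NormedSpace

namespace Matrix

section CommRing

variable {K : Type*} [CommRing K] {ι κ μ ν : Type*} [Fintype ι] [Fintype μ]

theorem transpose_mul_apply_eq_mulVec (X : Matrix ν ι K) (Y : Matrix ι κ K) (j : κ) :
    (X * Y)ᵀ j = X *ᵥ Yᵀ j := by
  rw [transpose_mul, mul_apply_eq_vecMul, vecMul_transpose]

theorem mul_transpose_sub_mul_transpose_apply (B Bτ : Matrix ν μ K) (X Y : Matrix κ μ K)
    (i : κ) : (B * Xᵀ - Bτ * Yᵀ)ᵀ i = fromCols B (-Bτ) *ᵥ Sum.elim (X i) (Y i) := by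
  rw [fromCols_mulVec_sumElim, neg_mulVec, ← sub_eq_add_neg, ← transpose_transpose X,
    ← transpose_transpose Y, ← transpose_mul_apply_eq_mulVec, ← transpose_mul_apply_eq_mulVec,
    transpose_transpose, transpose_transpose]
  rfl

variable [DecidableEq ι]

theorem mul_inv_mul_mulVec_eq_mulVec {M : Matrix ι ι K} (hM : IsUnit M) {x : ι → K}
    {F : Matrix ι μ K} {v : μ → K} (h : M *ᵥ x = F *ᵥ v) (C : Matrix ν ι K) :
    (C * M⁻¹ * F) *ᵥ v = C *ᵥ x := by
  rw [← mulVec_mulVec, ← mulVec_mulVec, ← h, mulVec_mulVec x M⁻¹ M,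
    nonsing_inv_mul M ((isUnit_iff_isUnit_det M).mp hM), one_mulVec]

variable [Fintype κ] [DecidableEq κ]

theorem inv_transpose_mul_transpose {R : Matrix κ κ K} (hR : IsUnit R) : R⁻¹ᵀ * Rᵀ = 1 := by
  rw [← transpose_mul, mul_nonsing_inv R ((isUnit_iff_isUnit_det R).mp hR), transpose_one]

theorem transpose_conj_diagonal_mul_inv_transpose {R : Matrix κ κ K} (hR : IsUnit R)
    (lam : κ → K) : (R * diagonal lam * R⁻¹)ᵀ * R⁻¹ᵀ = R⁻¹ᵀ * diagonal lam := by
  have hRR : Rᵀ * R⁻¹ᵀ = 1 := by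
    rw [← transpose_mul, nonsing_inv_mul R ((isUnit_iff_isUnit_det R).mp hR), transpose_one]
  rw [transpose_mul, transpose_mul, diagonal_transpose, Matrix.mul_assoc, Matrix.mul_assoc, hRR,
    Matrix.mul_one]

theorem neg_smul_one_sub_mulVec_of_sylvester {A : Matrix ι ι K} {P E : Matrix ι κ K}
    {M S : Matrix κ κ K} {lam : κ → K} (hP : A * P + P * M + E = 0)
    (hS : M * S = S * diagonal lam) (i : κ) :
    ((-lam i) • 1 - A) *ᵥ (P * S)ᵀ i = (E * S)ᵀ i := by
  have hPS : A * (P * S) + (P * S) * diagonal lam + E * S = 0 := by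
    rw [Matrix.mul_assoc, ← hS, ← Matrix.mul_assoc, ← Matrix.mul_assoc, ← Matrix.add_mul,
      ← Matrix.add_mul, hP, Matrix.zero_mul]
  ext k
  have hki := congrFun (congrFun hPS k) i
  simp only [add_apply, mul_diagonal, zero_apply] at hki
  rw [← transpose_mul_apply_eq_mulVec, transpose_apply, transpose_apply, Matrix.sub_mul, smul_mul,
    Matrix.one_mul, sub_apply, smul_apply, smul_eq_mul]
  linear_combination -hki

theorem tangential_eq_transpose_apply_of_sylvester {A : Matrix ι ι K} {B Bτ : Matrix ι μ K}
    (C : Matrix ν ι K) {P : Matrix ι κ K} {Ah S : Matrix κ κ K} {Bh Bhτ : Matrix κ μ K}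
    {lam : κ → K} (hP : A * P + P * Ahᵀ + B * Bhᵀ - Bτ * Bhτᵀ = 0)
    (hS : Ahᵀ * S = S * diagonal lam) {i : κ} (hi : IsUnit ((-lam i) • 1 - A)) :
    (C * ((-lam i) • 1 - A)⁻¹ * fromCols B (-Bτ)) *ᵥ Sum.elim ((Sᵀ * Bh) i) ((Sᵀ * Bhτ) i)
      = (C * P * S)ᵀ i := by
  have hES : (B * Bhᵀ - Bτ * Bhτᵀ) * S = B * (Sᵀ * Bh)ᵀ - Bτ * (Sᵀ * Bhτ)ᵀ := by
    simp only [transpose_mul, transpose_transpose, Matrix.sub_mul, Matrix.mul_assoc]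
  have hcol := neg_smul_one_sub_mulVec_of_sylvester (by rw [← hP, add_sub_assoc]) hS i
  rw [hES, mul_transpose_sub_mul_transpose_apply] at hcol
  rw [mul_inv_mul_mulVec_eq_mulVec hi hcol, Matrix.mul_assoc, transpose_mul_apply_eq_mulVec C]

end CommRing

variable {κ μ : Type*} [Fintype κ] [DecidableEq κ]

theorem exp_smul_conj_diagonal {R : Matrix κ κ ℂ} (hR : IsUnit R) (lam : κ → ℂ) (t : ℂ) :
    exp (t • (R * diagonal lam * R⁻¹))
      = R * diagonal (fun i => Complex.exp (lam i * t)) * R⁻¹ := by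
  have hconj := exp_units_conj hR.unit (diagonal (t • lam))
  rw [hR.unit_spec, coe_units_inv, hR.unit_spec, exp_diagonal] at hconj
  rw [← smul_mul_assoc, ← mul_smul_comm, ← diagonal_smul, hconj]
  congr 3
  funext i
  simp only [Pi.exp_def, ← Complex.exp_eq_exp_ℂ, Pi.smul_apply, smul_eq_mul, mul_comm]

theorem inv_mul_exp_smul_conj_diagonal_mul_apply [Fintype μ] {R : Matrix κ κ ℂ} (hR : IsUnit R)
    (lam : κ → ℂ) (t : ℂ) (Bh : Matrix κ μ ℂ) (i : κ) :
    (R⁻¹ * (exp (t • (R * diagonal lam * R⁻¹)) * Bh)) i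
      = Complex.exp (lam i * t) • (R⁻¹ * Bh) i := by
  rw [exp_smul_conj_diagonal hR, ← Matrix.mul_assoc, ← Matrix.mul_assoc, ← Matrix.mul_assoc,
    nonsing_inv_mul R ((isUnit_iff_isUnit_det R).mp hR), Matrix.one_mul, Matrix.mul_assoc]
  ext j
  simp only [diagonal_mul, Pi.smul_apply, smul_eq_mul]

end Matrix

theorem time_limited_b3_iff_right_tangential_interpolation_general
    {n m p r : ℕ}
    (A : Matrix (Fin n) (Fin n) ℂ)
    (B : Matrix (Fin n) (Fin m) ℂ)
    (C : Matrix (Fin p) (Fin n) ℂ)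
    (τ : ℝ)
    (Rhat : Matrix (Fin r) (Fin r) ℂ) (hRhat : IsUnit Rhat)
    (lamhat : Fin r → ℂ)
    (Ahat : Matrix (Fin r) (Fin r) ℂ)
    (hAhat : Ahat = Rhat * Matrix.diagonal lamhat * Rhat⁻¹)
    (Bhat : Matrix (Fin r) (Fin m) ℂ)
    (Chat : Matrix (Fin p) (Fin r) ℂ)
    (hinvA : ∀ i : Fin r, IsUnit ((-lamhat i) • (1 : Matrix (Fin n) (Fin n) ℂ) - A))
    (hinvAhat : ∀ i : Fin r, IsUnit ((-lamhat i) • (1 : Matrix (Fin r) (Fin r) ℂ) - Ahat))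
    (Btau : Matrix (Fin n) (Fin m) ℂ)
    (Bhattau : Matrix (Fin r) (Fin m) ℂ) (hBhattau : Bhattau = exp ((τ : ℂ) • Ahat) * Bhat)
    (GT : ℂ → Matrix (Fin p) (Fin m ⊕ Fin m) ℂ)
    (hGT : ∀ s : ℂ, GT s =
      C * (s • (1 : Matrix (Fin n) (Fin n) ℂ) - A)⁻¹ * Matrix.fromCols B (-Btau))
    (GThat : ℂ → Matrix (Fin p) (Fin m ⊕ Fin m) ℂ)
    (hGThat : ∀ s : ℂ, GThat s =
      Chat * (s • (1 : Matrix (Fin r) (Fin r) ℂ) - Ahat)⁻¹ * Matrix.fromCols Bhat (-Bhattau))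
    (rhat : Fin r → Fin m → ℂ) (hrhat : ∀ i j, rhat i j = (Rhat⁻¹ * Bhat) i j)
    (rtilde : Fin r → (Fin m ⊕ Fin m) → ℂ)
    (hrtilde : ∀ i, rtilde i =
      Sum.elim (rhat i) (fun j => Complex.exp (lamhat i * τ) * rhat i j))
    (Pbartau : Matrix (Fin n) (Fin r) ℂ)
    (hPbartau : A * Pbartau + Pbartau * Ahatᵀ + B * Bhatᵀ - Btau * Bhattauᵀ = 0)
    (Phattau : Matrix (Fin r) (Fin r) ℂ)
    (hPhattau : Ahat * Phattau + Phattau * Ahatᵀ + Bhat * Bhatᵀ - Bhattau * Bhattauᵀ = 0) :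
    C * Pbartau = Chat * Phattau ↔
      ∀ i : Fin r, (GT (-lamhat i)).mulVec (rtilde i) = (GThat (-lamhat i)).mulVec (rtilde i) := by
  have hS : Ahatᵀ * Rhat⁻¹ᵀ = Rhat⁻¹ᵀ * diagonal lamhat :=
    hAhat ▸ transpose_conj_diagonal_mul_inv_transpose hRhat lamhat
  have hr : ∀ i, rtilde i = Sum.elim ((Rhat⁻¹ᵀᵀ * Bhat) i) ((Rhat⁻¹ᵀᵀ * Bhattau) i) := by
    intro i
    rw [transpose_transpose, hrtilde, hBhattau, hAhat,
      inv_mul_exp_smul_conj_diagonal_mul_apply hRhat, ← funext (hrhat i)]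
    rfl
  have hfull : ∀ i, GT (-lamhat i) *ᵥ rtilde i = (C * Pbartau * Rhat⁻¹ᵀ)ᵀ i := fun i => by
    rw [hGT, hr]
    exact tangential_eq_transpose_apply_of_sylvester C hPbartau hS (hinvA i)
  have hred : ∀ i, GThat (-lamhat i) *ᵥ rtilde i = (Chat * Phattau * Rhat⁻¹ᵀ)ᵀ i := fun i => by
    rw [hGThat, hr]
    exact tangential_eq_transpose_apply_of_sylvester Chat hPhattau hS (hinvAhat i)
  simp only [hfull, hred]
  exact (mul_left_injective_of_inv _ _ (inv_transpose_mul_transpose hRhat)).eq_iff.symm.trans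
    (transpose_inj.symm.trans funext_iff)

/-- **Theorem 3, part 1.** For a reduced-order model with simple poles
(`Â = R̂ Λ̂ R̂⁻¹` diagonalizable), the gramian-based optimality condition (b3)
`C P̄τ = Ĉ P̂τ` of time-limited `H₂`-optimal model order reduction is equivalent to the
right tangential interpolation conditions
`G_T(−λ̂ᵢ) r̃ᵢ = Ĝ_T(−λ̂ᵢ) r̃ᵢ` for all `i`. -/
theorem time_limited_b3_iff_right_tangential_interpolation
    {n m p r : ℕ}
    (A : Matrix (Fin n) (Fin n) ℂ)
    (B : Matrix (Fin n) (Fin m) ℂ)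
    (C : Matrix (Fin p) (Fin n) ℂ)
    (τ : ℝ) (hτ : 0 < τ)
    (Rhat : Matrix (Fin r) (Fin r) ℂ) (hRhat : IsUnit Rhat)
    (lamhat : Fin r → ℂ)
    (Ahat : Matrix (Fin r) (Fin r) ℂ)
    (hAhat : Ahat = Rhat * Matrix.diagonal lamhat * Rhat⁻¹)
    (Bhat : Matrix (Fin r) (Fin m) ℂ)
    (Chat : Matrix (Fin p) (Fin r) ℂ)
    (hinvA : ∀ i : Fin r, IsUnit ((-lamhat i) • (1 : Matrix (Fin n) (Fin n) ℂ) - A))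
    (hinvAhat : ∀ i : Fin r, IsUnit ((-lamhat i) • (1 : Matrix (Fin r) (Fin r) ℂ) - Ahat))
    (Btau : Matrix (Fin n) (Fin m) ℂ) (hBtau : Btau = exp ((τ : ℂ) • A) * B)
    (Bhattau : Matrix (Fin r) (Fin m) ℂ) (hBhattau : Bhattau = exp ((τ : ℂ) • Ahat) * Bhat)
    (GT : ℂ → Matrix (Fin p) (Fin m ⊕ Fin m) ℂ)
    (hGT : ∀ s : ℂ, GT s =
      C * (s • (1 : Matrix (Fin n) (Fin n) ℂ) - A)⁻¹ * Matrix.fromCols B (-Btau))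
    (GThat : ℂ → Matrix (Fin p) (Fin m ⊕ Fin m) ℂ)
    (hGThat : ∀ s : ℂ, GThat s =
      Chat * (s • (1 : Matrix (Fin r) (Fin r) ℂ) - Ahat)⁻¹ * Matrix.fromCols Bhat (-Bhattau))
    (rhat : Fin r → Fin m → ℂ) (hrhat : ∀ i j, rhat i j = (Rhat⁻¹ * Bhat) i j)
    (rtilde : Fin r → (Fin m ⊕ Fin m) → ℂ)
    (hrtilde : ∀ i, rtilde i =
      Sum.elim (rhat i) (fun j => Complex.exp (lamhat i * τ) * rhat i j))
    (Pbartau : Matrix (Fin n) (Fin r) ℂ)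
    (hPbartau : A * Pbartau + Pbartau * Ahatᵀ + B * Bhatᵀ - Btau * Bhattauᵀ = 0)
    (Phattau : Matrix (Fin r) (Fin r) ℂ)
    (hPhattau : Ahat * Phattau + Phattau * Ahatᵀ + Bhat * Bhatᵀ - Bhattau * Bhattauᵀ = 0) :
    C * Pbartau = Chat * Phattau ↔
      ∀ i : Fin r, (GT (-lamhat i)).mulVec (rtilde i) = (GThat (-lamhat i)).mulVec (rtilde i) :=
  time_limited_b3_iff_right_tangential_interpolation_general A B C τ Rhat hRhat lamhat Ahat hAhat
    Bhat Chat hinvA hinvAhat Btau Bhattau hBhattau GT hGT GThat hGThat rhat hrhat rtilde hrtilde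
    Pbartau hPbartau Phattau hPhattau
end

section
/- Let $A \in \mathbb{C}^{n\times n}$, $B \in \mathbb{C}^{n\times m}$, $C \in \mathbb{C}^{p\times n}$, $\tau > 0$, $\hat{\lambda}_i \in \mathbb{C}$ with $-\hat{\lambda}_i I - A$ invertible, and $\hat{r}_i \in \mathbb{C}^{m}$. Set $B_\tau = \exp(\tau A)B$, $G_{\mathcal{T}}(s) = C(sI-A)^{-1}[B,\; -B_\tau]$, $\tilde{r}_i = \begin{bmatrix}\hat{r}_i \\ e^{\hat{\lambda}_i\tau}\hat{r}_i\end{bmatrix}$, $G(s) = C(sI-A)^{-1}B$, $G_\tau(s) = -e^{-s\tau}C(sI-A)^{-1}\exp(\tau A)B$, and $T_\tau(s) = G_\tau(s) + G(s)$. Then $G_{\mathcal{T}}(-\hat{\lambda}_i)\tilde{r}_i = T_\tau(-\hat{\lambda}_i)\hat{r}_i$. Consequently, for a reduced model $(\hat{A},\hat{B},\hat{C})$ with the analogous definitions $\hat{G}_{\mathcal{T}}$, $\hat{T}_\tau$, the tangential interpolation condition $G_{\mathcal{T}}(-\hat{\lambda}_i)\tilde{r}_i = \hat{G}_{\mathcal{T}}(-\hat{\lambda}_i)\tilde{r}_i$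 holds if and only if $T_\tau(-\hat{\lambda}_i)\hat{r}_i = \hat{T}_\tau(-\hat{\lambda}_i)\hat{r}_i$ holds. -/
open Matrix NormedSpace

/-! Stacking the input directions as `[r; c r]` turns the block input `[B, -E]` into the single
input matrix `B - c E`; with `c = e^{λτ}` and `E = e^{τA} B` this is exactly `T_τ(-λ)`. Since
the reduced model has the same form, both sides of (b31) equal the corresponding sides of (g3). -/

lemma mul_fromCols_neg_mulVec_sumElim_smul {R ι κ μ : Type*} [CommRing R] [Fintype κ]
    [Fintype μ] (M : Matrix ι κ R) (B E : Matrix κ μ R) (c : R) (r : μ → R) :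
    (M * fromCols B (-E)) *ᵥ Sum.elim r (c • r) = (-(c • (M * E)) + M * B) *ᵥ r := by
  rw [mul_fromCols, fromCols_mulVec_sumElim, mulVec_smul, add_mulVec, neg_mulVec,
    smul_mulVec, Matrix.mul_neg, neg_mulVec, smul_neg, add_comm]

theorem time_limited_interp_b31_iff_g3_general
    {n m p : ℕ}
    (A : Matrix (Fin n) (Fin n) ℂ)
    (B : Matrix (Fin n) (Fin m) ℂ)
    (C : Matrix (Fin p) (Fin n) ℂ)
    (τ : ℝ)
    (lam : ℂ)
    (rhat : Fin m → ℂ)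
    (Btau : Matrix (Fin n) (Fin m) ℂ) (hBtau : Btau = exp ((τ : ℂ) • A) * B)
    (GT : ℂ → Matrix (Fin p) (Fin m ⊕ Fin m) ℂ)
    (hGT : ∀ s : ℂ, GT s =
      C * (s • (1 : Matrix (Fin n) (Fin n) ℂ) - A)⁻¹ * Matrix.fromCols B (-Btau))
    (rtilde : (Fin m ⊕ Fin m) → ℂ)
    (hrtilde : rtilde = Sum.elim rhat (fun j => Complex.exp (lam * τ) * rhat j))
    (G : ℂ → Matrix (Fin p) (Fin m) ℂ)
    (hG : ∀ s : ℂ, G s = C * (s • (1 : Matrix (Fin n) (Fin n) ℂ) - A)⁻¹ * B)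
    (Gtau : ℂ → Matrix (Fin p) (Fin m) ℂ)
    (hGtau : ∀ s : ℂ, Gtau s = -(Complex.exp (-(s * τ)) •
      (C * (s • (1 : Matrix (Fin n) (Fin n) ℂ) - A)⁻¹ * (exp ((τ : ℂ) • A) * B))))
    (Ttau : ℂ → Matrix (Fin p) (Fin m) ℂ)
    (hTtau : ∀ s : ℂ, Ttau s = Gtau s + G s) :
    (GT (-lam)).mulVec rtilde = (Ttau (-lam)).mulVec rhat ∧
      ∀ (r : ℕ) (Ahat : Matrix (Fin r) (Fin r) ℂ) (Bhat : Matrix (Fin r) (Fin m) ℂ)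
        (Chat : Matrix (Fin p) (Fin r) ℂ)
        (GThat : Matrix (Fin p) (Fin m ⊕ Fin m) ℂ)
        (Tthat : Matrix (Fin p) (Fin m) ℂ),
        GThat = Chat * ((-lam) • (1 : Matrix (Fin r) (Fin r) ℂ) - Ahat)⁻¹ *
            Matrix.fromCols Bhat (-(exp ((τ : ℂ) • Ahat) * Bhat)) →
        Tthat = -(Complex.exp (-((-lam) * τ)) •
            (Chat * ((-lam) • (1 : Matrix (Fin r) (Fin r) ℂ) - Ahat)⁻¹ *
              (exp ((τ : ℂ) • Ahat) * Bhat))) +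
            Chat * ((-lam) • (1 : Matrix (Fin r) (Fin r) ℂ) - Ahat)⁻¹ * Bhat →
        ((GT (-lam)).mulVec rtilde = GThat.mulVec rtilde ↔
          (Ttau (-lam)).mulVec rhat = Tthat.mulVec rhat) := by
  have hexp : Complex.exp (-(-lam * τ)) = Complex.exp (lam * τ) := by rw [neg_mul, neg_neg]
  have full : (GT (-lam)).mulVec rtilde = (Ttau (-lam)).mulVec rhat := by
    rw [hGT, hTtau, hGtau, hG, hexp, hBtau, hrtilde]
    exact mul_fromCols_neg_mulVec_sumElim_smul _ _ _ _ _
  refine ⟨full, fun r Ahat Bhat Chat GThat Tthat hGThat hTthat => ?_⟩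
  have reduced : GThat.mulVec rtilde = Tthat.mulVec rhat := by
    rw [hGThat, hTthat, hexp, hrtilde]
    exact mul_fromCols_neg_mulVec_sumElim_smul _ _ _ _ _
  rw [full, reduced]

/-- **Theorem 3, part 2.** The tangential interpolation condition (b31) used in
time-limited pseudo-optimal reduction is equivalent to the right tangential
interpolation optimality condition (g3): one has
`G_T(−λ̂ᵢ) r̃ᵢ = T_τ(−λ̂ᵢ) r̂ᵢ`, and consequently, for any reduced model with the
analogous definitions, `G_T(−λ̂ᵢ) r̃ᵢ = Ĝ_T(−λ̂ᵢ) r̃ᵢ ↔ T_τ(−λ̂ᵢ) r̂ᵢ = T̂_τ(−λ̂ᵢ) r̂ᵢ`. -/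
theorem time_limited_interp_b31_iff_g3
    {n m p : ℕ}
    (A : Matrix (Fin n) (Fin n) ℂ)
    (B : Matrix (Fin n) (Fin m) ℂ)
    (C : Matrix (Fin p) (Fin n) ℂ)
    (τ : ℝ) (hτ : 0 < τ)
    (lam : ℂ) (hinvA : IsUnit ((-lam) • (1 : Matrix (Fin n) (Fin n) ℂ) - A))
    (rhat : Fin m → ℂ)
    (Btau : Matrix (Fin n) (Fin m) ℂ) (hBtau : Btau = exp ((τ : ℂ) • A) * B)
    (GT : ℂ → Matrix (Fin p) (Fin m ⊕ Fin m) ℂ)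
    (hGT : ∀ s : ℂ, GT s =
      C * (s • (1 : Matrix (Fin n) (Fin n) ℂ) - A)⁻¹ * Matrix.fromCols B (-Btau))
    (rtilde : (Fin m ⊕ Fin m) → ℂ)
    (hrtilde : rtilde = Sum.elim rhat (fun j => Complex.exp (lam * τ) * rhat j))
    (G : ℂ → Matrix (Fin p) (Fin m) ℂ)
    (hG : ∀ s : ℂ, G s = C * (s • (1 : Matrix (Fin n) (Fin n) ℂ) - A)⁻¹ * B)
    (Gtau : ℂ → Matrix (Fin p) (Fin m) ℂ)
    (hGtau : ∀ s : ℂ, Gtau s = -(Complex.exp (-(s * τ)) •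
      (C * (s • (1 : Matrix (Fin n) (Fin n) ℂ) - A)⁻¹ * (exp ((τ : ℂ) • A) * B))))
    (Ttau : ℂ → Matrix (Fin p) (Fin m) ℂ)
    (hTtau : ∀ s : ℂ, Ttau s = Gtau s + G s) :
    (GT (-lam)).mulVec rtilde = (Ttau (-lam)).mulVec rhat ∧
      ∀ (r : ℕ) (Ahat : Matrix (Fin r) (Fin r) ℂ) (Bhat : Matrix (Fin r) (Fin m) ℂ)
        (Chat : Matrix (Fin p) (Fin r) ℂ)
        (GThat : Matrix (Fin p) (Fin m ⊕ Fin m) ℂ)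
        (Tthat : Matrix (Fin p) (Fin m) ℂ),
        GThat = Chat * ((-lam) • (1 : Matrix (Fin r) (Fin r) ℂ) - Ahat)⁻¹ *
            Matrix.fromCols Bhat (-(exp ((τ : ℂ) • Ahat) * Bhat)) →
        Tthat = -(Complex.exp (-((-lam) * τ)) •
            (Chat * ((-lam) • (1 : Matrix (Fin r) (Fin r) ℂ) - Ahat)⁻¹ *
              (exp ((τ : ℂ) • Ahat) * Bhat))) +
            Chat * ((-lam) • (1 : Matrix (Fin r) (Fin r) ℂ) - Ahat)⁻¹ * Bhat →
        ((GT (-lam)).mulVec rtilde = GThat.mulVec rtilde ↔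
          (Ttau (-lam)).mulVec rhat = Tthat.mulVec rhat) :=
  time_limited_interp_b31_iff_g3_general A B C τ lam rhat Btau hBtau GT hGT rtilde hrtilde G hG Gtau
    hGtau Ttau hTtau
end

section
/- Let $A \in \mathbb{C}^{n\times n}$, $B \in \mathbb{C}^{n\times m}$, $C \in \mathbb{C}^{p\times n}$, $\tau > 0$. Let $\hat{A} = \hat{R}\hat{\Lambda}\hat{R}^{-1}$ with $\hat{R} \in \mathbb{C}^{r\times r}$ invertible and $\hat{\Lambda} = \mathrm{diag}(\hat{\lambda}_1,\ldots,\hat{\lambda}_r)$, let $\hat{B} \in \mathbb{C}^{r\times m}$, $\hat{C} \in \mathbb{C}^{p\times r}$, and suppose $-\hat{\lambda}_i I - A^T$ and $-\hat{\lambda}_i I - \hat{A}^T$ are invertible for every $i$. Set $C_\tau = C\exp(\tau A)$, $\hat{C}_\tau = \hat{C}\exp(\tau\hat{A})$, define $H_{\mathcal{T}}(s) = \begin{bmatrix}C\\ -C_\tau\end{bmatrix}(sI-A)^{-1}B$ and $\hat{H}_{\mathcal{T}}(s) = \begin{bmatrix}\hat{C}\\ -\hat{C}_\tau\end{bmatrix}(sI-\hat{A})^{-1}\hat{B}$,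 let $\hat{l}_i = \hat{C}\hat{R}e_i$ (the $i$-th column of $\hat{C}\hat{R}$), and set $\tilde{l}_i = \begin{bmatrix}\hat{l}_i \\ e^{\hat{\lambda}_i\tau}\hat{l}_i\end{bmatrix}$. Let $\bar{Q}_\tau$ satisfy $A^T\bar{Q}_\tau + \bar{Q}_\tau\hat{A} + C^T\hat{C} - C_\tau^T\hat{C}_\tau = 0$ and $\hat{Q}_\tau$ satisfy $\hat{A}^T\hat{Q}_\tau + \hat{Q}_\tau\hat{A} + \hat{C}^T\hat{C} - \hat{C}_\tau^T\hat{C}_\tau = 0$. Then $B^T\bar{Q}_\tau = \hat{B}^T\hat{Q}_\tau$ if and only if $\tilde{l}_i^T H_{\mathcal{T}}(-\hat{\lambda}_i) = \tilde{l}_i^T \hat{H}_{\mathcal{T}}(-\hat{\lambda}_i)$ for every $i = 1,\ldots,r$. -/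
open Matrix NormedSpace

/-!
Multiplying the Sylvester equation for `Q` on the right by the eigenvector matrix `R̂`
diagonalises its second term, and `Ĉ_τ R̂ = Ĉ R̂ e^{τΛ̂}`, so the `i`-th column `x` of `Q R̂`
solves `(−λ̂ᵢ I − Aᵀ) x = [C; −C_τ]ᵀ l̃ᵢ`. Hence `l̃ᵢᵀ H_T(−λ̂ᵢ) = xᵀ B` is the `i`-th column of
`Bᵀ Q̄_τ R̂`, and likewise for the reduced model; as `R̂` is invertible, the interpolation
conditions for all `i` say exactly that `Bᵀ Q̄_τ = B̂ᵀ Q̂_τ`.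
-/

section Sylvester

variable {K ι κ μ ρ : Type*} [CommRing K] [Fintype ι] [Fintype κ] [Fintype ρ]
  [DecidableEq ρ]

theorem Matrix.vecMul_mul_inv_mul_of_vecMul_eq [DecidableEq ι] {F : Matrix κ ι K}
    {M : Matrix ι ι K} (hM : IsUnit M) (B : Matrix ι μ K) {l : κ → K} {x : ι → K}
    (h : l ᵥ* F = x ᵥ* M) :
    l ᵥ* (F * M⁻¹ * B) = x ᵥ* B := by
  rw [← vecMul_vecMul, ← vecMul_vecMul, h, vecMul_vecMul, vecMul_vecMul, ← Matrix.mul_assoc,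
    mul_nonsing_inv _ ((isUnit_iff_isUnit_det M).mp hM), Matrix.one_mul]

theorem Matrix.vecMul_eq_of_sylvester_diagonal [DecidableEq ι] {A : Matrix ι ι K}
    {X : Matrix ι ρ K} {d : ρ → K} {F : Matrix κ ι K} {L : Matrix κ ρ K}
    (h : Aᵀ * X + X * diagonal d + Fᵀ * L = 0) (i : ρ) :
    Lᵀ i ᵥ* F = Xᵀ i ᵥ* ((-d i) • 1 - A) := by
  have hT := congrArg transpose h
  simp only [transpose_add, transpose_mul, transpose_transpose, diagonal_transpose,
    transpose_zero] at hT
  rw [vecMul_sub, vecMul_smul, vecMul_one, ← mul_apply_eq_vecMul, ← mul_apply_eq_vecMul]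
  funext j
  have hij := congrFun (congrFun hT i) j
  simp only [add_apply, diagonal_mul, transpose_apply, zero_apply, neg_smul, Pi.sub_apply,
    Pi.neg_apply, Pi.smul_apply, smul_eq_mul] at hij ⊢
  linear_combination hij

theorem Matrix.sylvester_mul_eigenvectors {A : Matrix ι ι K} {Q : Matrix ι ρ K}
    {Ahat R : Matrix ρ ρ K} {d : ρ → K} (hAR : Ahat * R = R * diagonal d)
    {C Ct : Matrix κ ι K} {G Gt : Matrix κ ρ K}
    (hQ : Aᵀ * Q + Q * Ahat + Cᵀ * G - Ctᵀ * Gt = 0) :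
    Aᵀ * (Q * R) + Q * R * diagonal d + (fromRows C (-Ct))ᵀ * fromRows (G * R) (Gt * R) = 0 :=
  calc _ = (Aᵀ * Q + Q * Ahat + Cᵀ * G - Ctᵀ * Gt) * R := by
        rw [transpose_fromRows, fromCols_mul_fromRows, transpose_neg, Matrix.neg_mul]
        simp only [Matrix.add_mul, Matrix.sub_mul, Matrix.mul_assoc, hAR]
        abel
    _ = 0 := by rw [hQ, Matrix.zero_mul]

theorem Matrix.vecMul_transfer_eq_of_sylvester [DecidableEq ι] {A : Matrix ι ι K}
    {Q : Matrix ι ρ K} {Ahat R : Matrix ρ ρ K} {d : ρ → K} (hAR : Ahat * R = R * diagonal d)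
    {C Ct : Matrix κ ι K} {G Gt : Matrix κ ρ K}
    (hQ : Aᵀ * Q + Q * Ahat + Cᵀ * G - Ctᵀ * Gt = 0) (B : Matrix ι μ K) (i : ρ)
    (hi : IsUnit ((-d i) • (1 : Matrix ι ι K) - Aᵀ)) :
    (fromRows (G * R) (Gt * R))ᵀ i ᵥ* (fromRows C (-Ct) * ((-d i) • 1 - A)⁻¹ * B) =
      (Bᵀ * Q * R)ᵀ i := by
  have hi' : IsUnit ((-d i) • (1 : Matrix ι ι K) - A) := by
    rwa [← isUnit_transpose, transpose_sub, transpose_smul, transpose_one]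
  rw [vecMul_mul_inv_mul_of_vecMul_eq hi' B
      (vecMul_eq_of_sylvester_diagonal (sylvester_mul_eigenvectors hAR hQ) i),
    ← mul_apply_eq_vecMul, transpose_mul, transpose_mul, transpose_mul, transpose_transpose,
    Matrix.mul_assoc]

end Sylvester

theorem Matrix.exp_smul_conj_diagonal_mul {ρ : Type*} [Fintype ρ] [DecidableEq ρ]
    {R : Matrix ρ ρ ℂ} (hR : IsUnit R) (d : ρ → ℂ) (t : ℂ) :
    exp (t • (R * diagonal d * R⁻¹)) * R = R * diagonal (fun i => Complex.exp (t * d i)) := by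
  rw [← Matrix.smul_mul, ← Matrix.mul_smul, ← diagonal_smul, exp_conj R _ hR, exp_diagonal,
    nonsing_inv_mul_cancel_right _ _ ((isUnit_iff_isUnit_det R).mp hR)]
  congr 2
  funext i
  rw [Pi.coe_exp, Pi.smul_apply, smul_eq_mul, Complex.exp_eq_exp_ℂ]

theorem time_limited_b2_iff_left_tangential_interpolation_general
    {n m p r : ℕ}
    (A : Matrix (Fin n) (Fin n) ℂ)
    (B : Matrix (Fin n) (Fin m) ℂ)
    (C : Matrix (Fin p) (Fin n) ℂ)
    (τ : ℝ)
    (Rhat : Matrix (Fin r) (Fin r) ℂ) (hRhat : IsUnit Rhat)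
    (lamhat : Fin r → ℂ)
    (Ahat : Matrix (Fin r) (Fin r) ℂ)
    (hAhat : Ahat = Rhat * Matrix.diagonal lamhat * Rhat⁻¹)
    (Bhat : Matrix (Fin r) (Fin m) ℂ)
    (Chat : Matrix (Fin p) (Fin r) ℂ)
    (hinvA : ∀ i : Fin r, IsUnit ((-lamhat i) • (1 : Matrix (Fin n) (Fin n) ℂ) - Aᵀ))
    (hinvAhat : ∀ i : Fin r, IsUnit ((-lamhat i) • (1 : Matrix (Fin r) (Fin r) ℂ) - Ahatᵀ))
    (Ctau : Matrix (Fin p) (Fin n) ℂ)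
    (Chattau : Matrix (Fin p) (Fin r) ℂ) (hChattau : Chattau = Chat * exp ((τ : ℂ) • Ahat))
    (HT : ℂ → Matrix (Fin p ⊕ Fin p) (Fin m) ℂ)
    (hHT : ∀ s : ℂ, HT s =
      Matrix.fromRows C (-Ctau) * (s • (1 : Matrix (Fin n) (Fin n) ℂ) - A)⁻¹ * B)
    (HThat : ℂ → Matrix (Fin p ⊕ Fin p) (Fin m) ℂ)
    (hHThat : ∀ s : ℂ, HThat s =
      Matrix.fromRows Chat (-Chattau) * (s • (1 : Matrix (Fin r) (Fin r) ℂ) - Ahat)⁻¹ * Bhat)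
    (lhat : Fin r → Fin p → ℂ) (hlhat : ∀ i k, lhat i k = (Chat * Rhat) k i)
    (ltilde : Fin r → (Fin p ⊕ Fin p) → ℂ)
    (hltilde : ∀ i, ltilde i =
      Sum.elim (lhat i) (fun k => Complex.exp (lamhat i * τ) * lhat i k))
    (Qbartau : Matrix (Fin n) (Fin r) ℂ)
    (hQbartau : Aᵀ * Qbartau + Qbartau * Ahat + Cᵀ * Chat - Ctauᵀ * Chattau = 0)
    (Qhattau : Matrix (Fin r) (Fin r) ℂ)
    (hQhattau : Ahatᵀ * Qhattau + Qhattau * Ahat + Chatᵀ * Chat - Chattauᵀ * Chattau = 0) :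
    Bᵀ * Qbartau = Bhatᵀ * Qhattau ↔
      ∀ i : Fin r,
        Matrix.vecMul (ltilde i) (HT (-lamhat i)) = Matrix.vecMul (ltilde i) (HThat (-lamhat i)) := by
  have hAR : Ahat * Rhat = Rhat * diagonal lamhat := by
    rw [hAhat, nonsing_inv_mul_cancel_right _ _ ((isUnit_iff_isUnit_det _).mp hRhat)]
  have hChattauR :
      Chattau * Rhat = Chat * Rhat * diagonal (fun j => Complex.exp (τ * lamhat j)) := by
    rw [hChattau, Matrix.mul_assoc, hAhat, exp_smul_conj_diagonal_mul hRhat, Matrix.mul_assoc]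
  have hltilde_row : ∀ i, ltilde i = (fromRows (Chat * Rhat) (Chattau * Rhat))ᵀ i := by
    intro i
    ext (k | k) <;> simp [hltilde, hlhat, hChattauR, mul_comm]
  simp only [hHT, hHThat, hltilde_row,
    vecMul_transfer_eq_of_sylvester hAR hQbartau B _ (hinvA _),
    vecMul_transfer_eq_of_sylvester hAR hQhattau Bhat _ (hinvAhat _)]
  let := hRhat.invertible
  rw [← Matrix.mul_left_inj_of_invertible Rhat, ← transpose_inj]
  exact funext_iff

/-- **Theorem 3, part 3.** For a reduced-order model with simple poles
(`Â = R̂ Λ̂ R̂⁻¹` diagonalizable), the gramian-based optimality condition (b2)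
`Bᵀ Q̄τ = B̂ᵀ Q̂τ` of time-limited `H₂`-optimal model order reduction is equivalent to the
left tangential interpolation conditions
`l̃ᵢᵀ H_T(−λ̂ᵢ) = l̃ᵢᵀ Ĥ_T(−λ̂ᵢ)` for all `i`. -/
theorem time_limited_b2_iff_left_tangential_interpolation
    {n m p r : ℕ}
    (A : Matrix (Fin n) (Fin n) ℂ)
    (B : Matrix (Fin n) (Fin m) ℂ)
    (C : Matrix (Fin p) (Fin n) ℂ)
    (τ : ℝ) (hτ : 0 < τ)
    (Rhat : Matrix (Fin r) (Fin r) ℂ) (hRhat : IsUnit Rhat)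
    (lamhat : Fin r → ℂ)
    (Ahat : Matrix (Fin r) (Fin r) ℂ)
    (hAhat : Ahat = Rhat * Matrix.diagonal lamhat * Rhat⁻¹)
    (Bhat : Matrix (Fin r) (Fin m) ℂ)
    (Chat : Matrix (Fin p) (Fin r) ℂ)
    (hinvA : ∀ i : Fin r, IsUnit ((-lamhat i) • (1 : Matrix (Fin n) (Fin n) ℂ) - Aᵀ))
    (hinvAhat : ∀ i : Fin r, IsUnit ((-lamhat i) • (1 : Matrix (Fin r) (Fin r) ℂ) - Ahatᵀ))
    (Ctau : Matrix (Fin p) (Fin n) ℂ) (hCtau : Ctau = C * exp ((τ : ℂ) • A))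
    (Chattau : Matrix (Fin p) (Fin r) ℂ) (hChattau : Chattau = Chat * exp ((τ : ℂ) • Ahat))
    (HT : ℂ → Matrix (Fin p ⊕ Fin p) (Fin m) ℂ)
    (hHT : ∀ s : ℂ, HT s =
      Matrix.fromRows C (-Ctau) * (s • (1 : Matrix (Fin n) (Fin n) ℂ) - A)⁻¹ * B)
    (HThat : ℂ → Matrix (Fin p ⊕ Fin p) (Fin m) ℂ)
    (hHThat : ∀ s : ℂ, HThat s =
      Matrix.fromRows Chat (-Chattau) * (s • (1 : Matrix (Fin r) (Fin r) ℂ) - Ahat)⁻¹ * Bhat)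
    (lhat : Fin r → Fin p → ℂ) (hlhat : ∀ i k, lhat i k = (Chat * Rhat) k i)
    (ltilde : Fin r → (Fin p ⊕ Fin p) → ℂ)
    (hltilde : ∀ i, ltilde i =
      Sum.elim (lhat i) (fun k => Complex.exp (lamhat i * τ) * lhat i k))
    (Qbartau : Matrix (Fin n) (Fin r) ℂ)
    (hQbartau : Aᵀ * Qbartau + Qbartau * Ahat + Cᵀ * Chat - Ctauᵀ * Chattau = 0)
    (Qhattau : Matrix (Fin r) (Fin r) ℂ)
    (hQhattau : Ahatᵀ * Qhattau + Qhattau * Ahat + Chatᵀ * Chat - Chattauᵀ * Chattau = 0) :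
    Bᵀ * Qbartau = Bhatᵀ * Qhattau ↔
      ∀ i : Fin r,
        Matrix.vecMul (ltilde i) (HT (-lamhat i)) = Matrix.vecMul (ltilde i) (HThat (-lamhat i)) :=
  time_limited_b2_iff_left_tangential_interpolation_general A B C τ Rhat hRhat lamhat Ahat hAhat
    Bhat Chat hinvA hinvAhat Ctau Chattau hChattau HT hHT HThat hHThat lhat hlhat ltilde hltilde
    Qbartau hQbartau Qhattau hQhattau
end

section
/- Let $A \in \mathbb{C}^{n\times n}$, $B \in \mathbb{C}^{n\times m}$, $C \in \mathbb{C}^{p\times n}$, $\tau > 0$, $\hat{\lambda}_i \in \mathbb{C}$ with $-\hat{\lambda}_i I - A$ invertible, and $\hat{l}_i \in \mathbb{C}^{p}$. Set $C_\tau = C\exp(\tau A)$, $H_{\mathcal{T}}(s) = \begin{bmatrix}C\\ -C_\tau\end{bmatrix}(sI-A)^{-1}B$, $\tilde{l}_i = \begin{bmatrix}\hat{l}_i \\ e^{\hat{\lambda}_i\tau}\hat{l}_i\end{bmatrix}$, $G(s) = C(sI-A)^{-1}B$, $G_\tau(s) = -e^{-s\tau}C(sI-A)^{-1}\exp(\tau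 A)B$, and $T_\tau(s) = G_\tau(s) + G(s)$. Then $\tilde{l}_i^T H_{\mathcal{T}}(-\hat{\lambda}_i) = \hat{l}_i^T T_\tau(-\hat{\lambda}_i)$. Consequently, for a reduced model $(\hat{A},\hat{B},\hat{C})$ with the analogous definitions $\hat{H}_{\mathcal{T}}$, $\hat{T}_\tau$, the tangential interpolation condition $\tilde{l}_i^T H_{\mathcal{T}}(-\hat{\lambda}_i) = \tilde{l}_i^T\hat{H}_{\mathcal{T}}(-\hat{\lambda}_i)$ holds if and only if $\hat{l}_i^T T_\tau(-\hat{\lambda}_i) = \hat{l}_i^T\hat{T}_\tau(-\hat{\lambda}_i)$ holds. -/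
/-!
The matrix exponential `exp (τ A)` commutes with the resolvent `(s I - A)⁻¹`, so the lower block
row `-C exp (τ A) (s I - A)⁻¹ B` of `H_T` equals `-C (s I - A)⁻¹ exp (τ A) B`. At `s = -λ̂` the
weight `e^{λ̂ τ}` carried by the lower half of `l̃` is exactly `e^{-s τ}`, so `l̃ᵀ H_T(-λ̂)` is
`l̂ᵀ (G_τ + G)(-λ̂)`. This is pure algebra, valid in every state dimension, hence also for the
reduced model, and the two interpolation conditions compare equal quantities.
-/

open Matrix NormedSpace

theorem Commute.ringInverse_right {M₀ : Type*} [MonoidWithZero M₀] {a b : M₀}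
    (h : Commute a b) : Commute a (Ring.inverse b) := by
  by_cases hb : IsUnit b
  · obtain ⟨u, rfl⟩ := hb
    rw [Ring.inverse_unit]
    exact h.units_inv_right
  · rw [Ring.inverse_non_unit _ hb]
    exact Commute.zero_right a

namespace Matrix

variable {ι : Type*} [Fintype ι] [DecidableEq ι]

theorem commute_nonsing_inv_of_commute {R : Type*} [CommRing R] {E M : Matrix ι ι R}
    (h : Commute E M) : Commute E M⁻¹ := by
  rw [nonsing_inv_eq_ringInverse]
  exact h.ringInverse_right

theorem commute_exp_smul_inv_smul_one_sub (A : Matrix ι ι ℂ) (t s : ℂ) :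
    Commute (exp (t • A)) (s • (1 : Matrix ι ι ℂ) - A)⁻¹ := by
  refine commute_nonsing_inv_of_commute (Commute.exp_left ?_)
  exact (((Commute.one_right A).smul_right s).sub_right (Commute.refl A)).smul_left t

theorem sumElim_smul_vecMul_fromRows_neg_mul {R κ n m : Type*} [CommRing R] [Fintype κ]
    [Fintype n] (l : κ → R) (c : R) (C : Matrix κ n R) (E X : Matrix n n R)
    (B : Matrix n m R) (h : Commute E X) :
    Sum.elim l (c • l) ᵥ* (fromRows C (-(C * E)) * X * B) =
      l ᵥ* (-(c • (C * X * (E * B))) + C * X * B) := by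
  have hCEXB : C * E * X * B = C * X * (E * B) := by
    rw [Matrix.mul_assoc C E X, h.eq, ← Matrix.mul_assoc, Matrix.mul_assoc]
  rw [fromRows_mul, fromRows_mul, sumElim_vecMul_fromRows, Matrix.neg_mul, Matrix.neg_mul, hCEXB]
  simp only [vecMul_add, vecMul_neg, vecMul_smul, smul_vecMul]
  abel

end Matrix

theorem sumElim_exp_vecMul_fromRows_resolvent {ι κ m : Type*} [Fintype ι] [DecidableEq ι]
    [Fintype κ] (A : Matrix ι ι ℂ) (B : Matrix ι m ℂ) (C : Matrix κ ι ℂ) (τ : ℝ) (lam : ℂ)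
    (l : κ → ℂ) :
    Sum.elim l (fun k => Complex.exp (lam * τ) * l k) ᵥ*
        (fromRows C (-(C * exp ((τ : ℂ) • A))) * ((-lam) • (1 : Matrix ι ι ℂ) - A)⁻¹ * B) =
      l ᵥ* (-(Complex.exp (-((-lam) * τ)) •
          (C * ((-lam) • (1 : Matrix ι ι ℂ) - A)⁻¹ * (exp ((τ : ℂ) • A) * B))) +
        C * ((-lam) • (1 : Matrix ι ι ℂ) - A)⁻¹ * B) := by
  rw [neg_mul, neg_neg]
  exact sumElim_smul_vecMul_fromRows_neg_mul l _ C _ _ B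
    (commute_exp_smul_inv_smul_one_sub A _ _)

theorem time_limited_interp_b21_iff_g2_general
    {n m p : ℕ}
    (A : Matrix (Fin n) (Fin n) ℂ)
    (B : Matrix (Fin n) (Fin m) ℂ)
    (C : Matrix (Fin p) (Fin n) ℂ)
    (τ : ℝ)
    (lam : ℂ)
    (lhat : Fin p → ℂ)
    (Ctau : Matrix (Fin p) (Fin n) ℂ) (hCtau : Ctau = C * NormedSpace.exp ((τ : ℂ) • A))
    (HT : ℂ → Matrix (Fin p ⊕ Fin p) (Fin m) ℂ)
    (hHT : ∀ s : ℂ, HT s =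
      Matrix.fromRows C (-Ctau) * (s • (1 : Matrix (Fin n) (Fin n) ℂ) - A)⁻¹ * B)
    (ltilde : (Fin p ⊕ Fin p) → ℂ)
    (hltilde : ltilde = Sum.elim lhat (fun k => Complex.exp (lam * τ) * lhat k))
    (G : ℂ → Matrix (Fin p) (Fin m) ℂ)
    (hG : ∀ s : ℂ, G s = C * (s • (1 : Matrix (Fin n) (Fin n) ℂ) - A)⁻¹ * B)
    (Gtau : ℂ → Matrix (Fin p) (Fin m) ℂ)
    (hGtau : ∀ s : ℂ, Gtau s = -(Complex.exp (-(s * τ)) •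
      (C * (s • (1 : Matrix (Fin n) (Fin n) ℂ) - A)⁻¹ * (NormedSpace.exp ((τ : ℂ) • A) * B))))
    (Ttau : ℂ → Matrix (Fin p) (Fin m) ℂ)
    (hTtau : ∀ s : ℂ, Ttau s = Gtau s + G s) :
    Matrix.vecMul ltilde (HT (-lam)) = Matrix.vecMul lhat (Ttau (-lam)) ∧
      ∀ (r : ℕ) (Ahat : Matrix (Fin r) (Fin r) ℂ) (Bhat : Matrix (Fin r) (Fin m) ℂ)
        (Chat : Matrix (Fin p) (Fin r) ℂ)
        (HThat : Matrix (Fin p ⊕ Fin p) (Fin m) ℂ)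
        (Tthat : Matrix (Fin p) (Fin m) ℂ),
        HThat = Matrix.fromRows Chat (-(Chat * NormedSpace.exp ((τ : ℂ) • Ahat))) *
            ((-lam) • (1 : Matrix (Fin r) (Fin r) ℂ) - Ahat)⁻¹ * Bhat →
        Tthat = -(Complex.exp (-((-lam) * τ)) •
            (Chat * ((-lam) • (1 : Matrix (Fin r) (Fin r) ℂ) - Ahat)⁻¹ *
              (NormedSpace.exp ((τ : ℂ) • Ahat) * Bhat))) +
            Chat * ((-lam) • (1 : Matrix (Fin r) (Fin r) ℂ) - Ahat)⁻¹ * Bhat →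
        (Matrix.vecMul ltilde (HT (-lam)) = Matrix.vecMul ltilde HThat ↔
          Matrix.vecMul lhat (Ttau (-lam)) = Matrix.vecMul lhat Tthat) := by
  have hfull : Matrix.vecMul ltilde (HT (-lam)) = Matrix.vecMul lhat (Ttau (-lam)) := by
    rw [hHT, hTtau, hGtau, hG, hCtau, hltilde]
    exact sumElim_exp_vecMul_fromRows_resolvent A B C τ lam lhat
  refine ⟨hfull, fun r Ahat Bhat Chat HThat Tthat hHThat hTthat => ?_⟩
  rw [hfull, hHThat, hTthat, hltilde, sumElim_exp_vecMul_fromRows_resolvent]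

/-- **Theorem 3, part 4.** The left tangential interpolation condition (b21) used in
time-limited pseudo-optimal reduction is equivalent to the left tangential
interpolation optimality condition (g2): one has
`l̃ᵢᵀ H_T(−λ̂ᵢ) = l̂ᵢᵀ T_τ(−λ̂ᵢ)`, and consequently, for any reduced model with the
analogous definitions, `l̃ᵢᵀ H_T(−λ̂ᵢ) = l̃ᵢᵀ Ĥ_T(−λ̂ᵢ) ↔ l̂ᵢᵀ T_τ(−λ̂ᵢ) = l̂ᵢᵀ T̂_τ(−λ̂ᵢ)`. -/
theorem time_limited_interp_b21_iff_g2
    {n m p : ℕ}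
    (A : Matrix (Fin n) (Fin n) ℂ)
    (B : Matrix (Fin n) (Fin m) ℂ)
    (C : Matrix (Fin p) (Fin n) ℂ)
    (τ : ℝ) (hτ : 0 < τ)
    (lam : ℂ) (hinvA : IsUnit ((-lam) • (1 : Matrix (Fin n) (Fin n) ℂ) - A))
    (lhat : Fin p → ℂ)
    (Ctau : Matrix (Fin p) (Fin n) ℂ) (hCtau : Ctau = C * NormedSpace.exp ((τ : ℂ) • A))
    (HT : ℂ → Matrix (Fin p ⊕ Fin p) (Fin m) ℂ)
    (hHT : ∀ s : ℂ, HT s =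
      Matrix.fromRows C (-Ctau) * (s • (1 : Matrix (Fin n) (Fin n) ℂ) - A)⁻¹ * B)
    (ltilde : (Fin p ⊕ Fin p) → ℂ)
    (hltilde : ltilde = Sum.elim lhat (fun k => Complex.exp (lam * τ) * lhat k))
    (G : ℂ → Matrix (Fin p) (Fin m) ℂ)
    (hG : ∀ s : ℂ, G s = C * (s • (1 : Matrix (Fin n) (Fin n) ℂ) - A)⁻¹ * B)
    (Gtau : ℂ → Matrix (Fin p) (Fin m) ℂ)
    (hGtau : ∀ s : ℂ, Gtau s = -(Complex.exp (-(s * τ)) •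
      (C * (s • (1 : Matrix (Fin n) (Fin n) ℂ) - A)⁻¹ * (NormedSpace.exp ((τ : ℂ) • A) * B))))
    (Ttau : ℂ → Matrix (Fin p) (Fin m) ℂ)
    (hTtau : ∀ s : ℂ, Ttau s = Gtau s + G s) :
    Matrix.vecMul ltilde (HT (-lam)) = Matrix.vecMul lhat (Ttau (-lam)) ∧
      ∀ (r : ℕ) (Ahat : Matrix (Fin r) (Fin r) ℂ) (Bhat : Matrix (Fin r) (Fin m) ℂ)
        (Chat : Matrix (Fin p) (Fin r) ℂ)
        (HThat : Matrix (Fin p ⊕ Fin p) (Fin m) ℂ)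
        (Tthat : Matrix (Fin p) (Fin m) ℂ),
        HThat = Matrix.fromRows Chat (-(Chat * NormedSpace.exp ((τ : ℂ) • Ahat))) *
            ((-lam) • (1 : Matrix (Fin r) (Fin r) ℂ) - Ahat)⁻¹ * Bhat →
        Tthat = -(Complex.exp (-((-lam) * τ)) •
            (Chat * ((-lam) • (1 : Matrix (Fin r) (Fin r) ℂ) - Ahat)⁻¹ *
              (NormedSpace.exp ((τ : ℂ) • Ahat) * Bhat))) +
            Chat * ((-lam) • (1 : Matrix (Fin r) (Fin r) ℂ) - Ahat)⁻¹ * Bhat →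
        (Matrix.vecMul ltilde (HT (-lam)) = Matrix.vecMul ltilde HThat ↔
          Matrix.vecMul lhat (Ttau (-lam)) = Matrix.vecMul lhat Tthat) :=
  time_limited_interp_b21_iff_g2_general A B C τ lam lhat Ctau hCtau HT hHT ltilde hltilde G hG Gtau
    hGtau Ttau hTtau
end

section
/- Let $A \in \mathbb{R}^{n\times n}$, $B \in \mathbb{R}^{n\times m}$, $\hat{A} \in \mathbb{R}^{r\times r}$, $\tau > 0$, $\hat{V}, \hat{W} \in \mathbb{R}^{n\times r}$ with $\hat{W}^T\hat{V} = I$, $\bar{P}_\tau, \bar{Q} \in \mathbb{R}^{n\times r}$, and $\hat{P}_\tau, \hat{Q} \in \mathbb{R}^{r\times r}$ with $\hat{Q}$ symmetric. Set $\hat{B} = \hat{W}^T B$, $Z_\tau = \tau(\hat{Q}\exp(\tau\hat{A})\hat{B}\hat{B}^T\exp(\tau\hat{A})^T - \bar{Q}^T\exp(\tau A)B\hat{B}^T\exp(\tau\hat{A})^T)$ and $X_\tau = Z_\tau + \exp(\tau\hat{A})^T\bar{Q}^T\exp(\tau A)\bar{P}_\tau - \exp(\tau\hat{A})^T\hat{Q}\exp(\tau\hat{A})\hat{P}_\tau$.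 If $\exp(\tau A) = \hat{V}\exp(\tau\hat{A})\hat{W}^T$, $\bar{Q} = \hat{W}\hat{Q}$, and $\bar{P}_\tau = \hat{V}\hat{P}_\tau$, then $Z_\tau = 0$ and $X_\tau = 0$. -/
open Matrix NormedSpace

section ObliqueProjection

variable {R ι κ α : Type*} [CommSemiring R] [Fintype ι] [Fintype κ] [DecidableEq κ]
  {V W : Matrix ι κ R}

theorem Matrix.transpose_mul_mul_cancel (hWV : Wᵀ * V = 1) (X : Matrix κ α R) :
    Wᵀ * (V * X) = X := by
  rw [← Matrix.mul_assoc, hWV, Matrix.one_mul]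

theorem Matrix.transpose_mul_oblique_eq (hWV : Wᵀ * V = 1) {Qhat : Matrix κ κ R}
    (hQhat : Qhatᵀ = Qhat) (Ehat : Matrix κ κ R) :
    (W * Qhat)ᵀ * (V * Ehat * Wᵀ) = Qhat * Ehat * Wᵀ := by
  rw [transpose_mul, hQhat, Matrix.mul_assoc, Matrix.mul_assoc, transpose_mul_mul_cancel hWV,
    Matrix.mul_assoc]

end ObliqueProjection

theorem time_limited_deviation_vanishes_general
    {n m r : ℕ}
    (A : Matrix (Fin n) (Fin n) ℝ)
    (B : Matrix (Fin n) (Fin m) ℝ)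
    (Ahat : Matrix (Fin r) (Fin r) ℝ)
    (τ : ℝ)
    (V W : Matrix (Fin n) (Fin r) ℝ)
    (hWV : Wᵀ * V = 1)
    (Pbartau Qbar : Matrix (Fin n) (Fin r) ℝ)
    (Phattau Qhat : Matrix (Fin r) (Fin r) ℝ)
    (hQhatsymm : Qhatᵀ = Qhat)
    (Bhat : Matrix (Fin r) (Fin m) ℝ) (hBhat : Bhat = Wᵀ * B)
    (Ztau : Matrix (Fin r) (Fin r) ℝ)
    (hZtau : Ztau = τ • (Qhat * exp (τ • Ahat) * Bhat * Bhatᵀ * (exp (τ • Ahat))ᵀ -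
      Qbarᵀ * exp (τ • A) * B * Bhatᵀ * (exp (τ • Ahat))ᵀ))
    (Xtau : Matrix (Fin r) (Fin r) ℝ)
    (hXtau : Xtau = Ztau + (exp (τ • Ahat))ᵀ * Qbarᵀ * exp (τ • A) * Pbartau -
      (exp (τ • Ahat))ᵀ * Qhat * exp (τ • Ahat) * Phattau)
    (hexp : exp (τ • A) = V * exp (τ • Ahat) * Wᵀ)
    (hQbar : Qbar = W * Qhat)
    (hPbartau : Pbartau = V * Phattau) :
    Ztau = 0 ∧ Xtau = 0 := by
  have hcross : Qbarᵀ * exp (τ • A) = Qhat * exp (τ • Ahat) * Wᵀ := by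
    rw [hQbar, hexp, transpose_mul_oblique_eq hWV hQhatsymm]
  have hZ : Ztau = 0 := by
    rw [hZtau, hcross, hBhat]
    simp only [Matrix.mul_assoc, sub_self, smul_zero]
  refine ⟨hZ, ?_⟩
  rw [hXtau, hZ, zero_add, Matrix.mul_assoc _ Qbarᵀ, hcross, hPbartau]
  simp only [Matrix.mul_assoc, transpose_mul_mul_cancel hWV, sub_self]

/-- **Section 4.1 claim (time-limited case).** The deviation `Xτ` in the time-limited
optimality condition (b1) vanishes when the oblique projection exactly reproduces the
matrix exponential and the standard cross gramian, i.e. when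
`exp(τA) = V̂ exp(τÂ) Ŵᵀ`, `Q̄ = Ŵ Q̂`, and `P̄τ = V̂ P̂τ`. -/
theorem time_limited_deviation_vanishes
    {n m r : ℕ}
    (A : Matrix (Fin n) (Fin n) ℝ)
    (B : Matrix (Fin n) (Fin m) ℝ)
    (Ahat : Matrix (Fin r) (Fin r) ℝ)
    (τ : ℝ) (hτ : 0 < τ)
    (V W : Matrix (Fin n) (Fin r) ℝ)
    (hWV : Wᵀ * V = 1)
    (Pbartau Qbar : Matrix (Fin n) (Fin r) ℝ)
    (Phattau Qhat : Matrix (Fin r) (Fin r) ℝ)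
    (hQhatsymm : Qhatᵀ = Qhat)
    (Bhat : Matrix (Fin r) (Fin m) ℝ) (hBhat : Bhat = Wᵀ * B)
    (Ztau : Matrix (Fin r) (Fin r) ℝ)
    (hZtau : Ztau = τ • (Qhat * exp (τ • Ahat) * Bhat * Bhatᵀ * (exp (τ • Ahat))ᵀ -
      Qbarᵀ * exp (τ • A) * B * Bhatᵀ * (exp (τ • Ahat))ᵀ))
    (Xtau : Matrix (Fin r) (Fin r) ℝ)
    (hXtau : Xtau = Ztau + (exp (τ • Ahat))ᵀ * Qbarᵀ * exp (τ • A) * Pbartau -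
      (exp (τ • Ahat))ᵀ * Qhat * exp (τ • Ahat) * Phattau)
    (hexp : exp (τ • A) = V * exp (τ • Ahat) * Wᵀ)
    (hQbar : Qbar = W * Qhat)
    (hPbartau : Pbartau = V * Phattau) :
    Ztau = 0 ∧ Xtau = 0 :=
  time_limited_deviation_vanishes_general A B Ahat τ V W hWV Pbartau Qbar Phattau Qhat hQhatsymm
    Bhat hBhat Ztau hZtau Xtau hXtau hexp hQbar hPbartau
end
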